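/- arXiv:1211.7259 — 5 statements merged into one kernel-verified Lean document; each statement's English description precedes it below -/
import Mathlib

section
/- Let k, l be integers with 1 ≤ l < k, set p = k/l, and let r be a real number with 0 < r ≤ p. Define α_j = j/l for 1 ≤ j ≤ l and α_j = (r + j − l)/(k − l) for l + 1 ≤ j ≤ k, and β_j = (r + j − 1)/k for 1 ≤ j ≤ k. Then for every natural number m, A_m(p,r) = (r / √(2π·k·l·(k−l))) · (p/(p−1))^r · (∏_{j=1}^{k} Γ(β_j + m/l)) / (∏_{j=1}^{k} Γ(α_j + m/l)) · c(p)^m. -/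
/-!
For `p = k/l` the Raney number is `r Γ(mp + r) / (m! Γ(m(p - 1) + r + 1))`. Gauss's multiplication
formula `∏_{j<n} Γ((s + j)/n) = √((2π)^(n-1) n) n^(-s) Γ(s)` splits `Γ(mp + r)` (with `n = k`) into
the `Γ(β_j + m/l)`, and `m! = Γ(m + 1)` (with `n = l`) together with `Γ(m(p - 1) + r + 1)` (with
`n = k - l`) into the `Γ(α_j + m/l)`. The leftover powers of `k`, `l`, `k - l` and constants
`√((2π)^(n-1) n)` combine into the prefactor and `c(p)^m`.

Gauss's formula follows from the Bohr–Mollerup theorem; its constant comes from the reflection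
formula, `∏_{j=1}^{n-1} Γ(j/n) Γ(1 - j/n) = π^(n-1) / ∏ sin(πj/n)`, and
`∏_{j=1}^{n-1} 2 sin(πj/n) = n`.
-/

open Real

/-- The Raney numbers (two-parameter Fuss–Catalan numbers):
`A 0 (p,r) = 1` and `A m (p,r) = (r/m!)·∏_{i=1}^{m−1} (m·p + r − i)` for `m ≥ 1`. -/
noncomputable def raney (p r : ℝ) : ℕ → ℝ
  | 0 => 1
  | (m + 1) => (r / (Nat.factorial (m + 1) : ℝ)) *
      ∏ i ∈ Finset.Icc 1 m, (((m : ℝ) + 1) * p + r - (i : ℝ))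

open Finset
open scoped Nat

theorem ConvexOn.finset_sum {ι 𝕜 E β : Type*} [Semiring 𝕜] [PartialOrder 𝕜]
    [AddCommMonoid E] [AddCommMonoid β] [PartialOrder β] [IsOrderedAddMonoid β] [SMul 𝕜 E]
    [Module 𝕜 β]
    {s : Set E} (hs : Convex 𝕜 s) (t : Finset ι) {f : ι → E → β}
    (hf : ∀ i ∈ t, ConvexOn 𝕜 s (f i)) : ConvexOn 𝕜 s fun x => ∑ i ∈ t, f i x := by
  classical
  induction t using Finset.induction with
  | empty => simpa only [sum_empty] using convexOn_const (0 : β) hs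
  | insert a t ha ih =>
    simp only [sum_insert ha]
    exact (hf a (mem_insert_self a t)).add (ih fun i hi => hf i (mem_insert_of_mem hi))

theorem Finset.prod_Ioc_eq_prod_range {M : Type*} [CommMonoid M] (f : ℕ → M) (a b : ℕ) :
    ∏ j ∈ Ioc a b, f j = ∏ i ∈ range (b - a), f (a + 1 + i) := by
  rw [← Icc_add_one_left_eq_Ioc, ← Ico_add_one_right_eq_Icc, prod_Ico_eq_prod_range,
    Nat.add_sub_add_right]

theorem Real.Gamma_eq_prod_Icc_mul_Gamma_sub {y : ℝ} {m : ℕ} (h : (m : ℝ) < y) :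
    Gamma y = (∏ i ∈ Icc 1 m, (y - i)) * Gamma (y - m) := by
  induction m with
  | zero => simp
  | succ m ih =>
    push_cast at h
    rw [ih (by linarith), prod_Icc_succ_top (by omega), mul_assoc,
      show y - m = y - (m + 1 : ℕ) + 1 by push_cast; ring, Gamma_add_one (by push_cast; linarith)]

/-- The factors are `‖1 - ζ ^ (j + 1)‖` for the primitive root `ζ = exp(2πi/(n+1))`. -/
theorem prod_two_mul_sin_pi_mul_div (n : ℕ) :
    ∏ j ∈ range n, 2 * sin (π * (j + 1) / (n + 1)) = n + 1 := by
  have hζ := Complex.isPrimitiveRoot_exp (n + 1) n.succ_ne_zero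
  have h := congrArg (‖·‖) hζ.prod_one_sub_pow_eq_order
  rw [norm_prod, show ((n : ℂ) + 1) = ((n + 1 : ℕ) : ℂ) by push_cast; ring,
    Complex.norm_natCast] at h
  push_cast at h
  refine (prod_congr rfl fun j hj => ?_).trans h
  have hj : (j : ℝ) ≤ n := by exact_mod_cast (mem_range.1 hj).le
  set θ : ℝ := 2 * π * (j + 1) / (n + 1)
  have hθ : Complex.exp (2 * π * Complex.I / (n + 1)) ^ (j + 1) =
      Complex.exp (Complex.I * θ) := by
    rw [← Complex.exp_nat_mul]; push_cast [θ]; ring_nf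
  have hsin : 0 ≤ sin (θ / 2) := sin_nonneg_of_nonneg_of_le_pi (by positivity) (by
    rw [div_le_iff₀ two_pos, div_le_iff₀ (by positivity)]; nlinarith [pi_pos])
  rw [hθ, norm_sub_rev, Complex.norm_exp_I_mul_ofReal_sub_one,
    Real.norm_of_nonneg (by positivity)]
  congr 2
  ring

theorem prod_Gamma_succ_div_succ (n : ℕ) :
    ∏ j ∈ range n, Gamma ((j + 1) / (n + 1)) = √((2 * π) ^ n / (n + 1)) := by
  have hpos : 0 < ∏ j ∈ range n, Gamma ((j + 1) / (n + 1)) :=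
    prod_pos fun j _ => Gamma_pos_of_pos (by positivity)
  have hrefl : ∏ j ∈ range n, Gamma ((j + 1) / (n + 1)) =
      ∏ j ∈ range n, Gamma (1 - (j + 1) / (n + 1)) := by
    rw [← prod_range_reflect]
    refine prod_congr rfl fun j hj => ?_
    have hj := mem_range.1 hj
    rw [show ((n - 1 - j : ℕ) : ℝ) = n - 1 - j by
      rw [Nat.sub_sub, Nat.cast_sub (by omega)]; push_cast; ring]
    congr 1
    field_simp
    ring
  have hsin := prod_two_mul_sin_pi_mul_div n
  rw [prod_mul_distrib, prod_const, card_range] at hsin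
  have hsq : (∏ j ∈ range n, Gamma ((j + 1) / (n + 1))) ^ 2 = (2 * π) ^ n / (n + 1) := by
    calc (∏ j ∈ range n, Gamma ((j + 1) / (n + 1))) ^ 2
        = ∏ j ∈ range n, Gamma ((j + 1) / (n + 1)) * Gamma (1 - (j + 1) / (n + 1)) := by
          rw [sq, prod_mul_distrib, ← hrefl]
      _ = ∏ j ∈ range n, π / sin (π * (j + 1) / (n + 1)) := by
          simp only [Gamma_mul_Gamma_one_sub, mul_div_assoc]
      _ = (2 * π) ^ n / (n + 1) := by
          have hprod : ∏ j ∈ range n, sin (π * (j + 1) / (n + 1)) ≠ 0 := by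
            rintro h0; rw [h0] at hsin; norm_cast at hsin
          rw [prod_div_distrib, prod_const, card_range]
          field_simp
          linear_combination (-π ^ n) * hsin
  rw [← hsq, sqrt_sq hpos.le]

theorem convexOn_log_Gamma_add_div {a b : ℝ} (ha : 0 < a) (hb : 0 ≤ b) :
    ConvexOn ℝ (Set.Ioi 0) fun x => log (Gamma ((x + b) / a)) := by
  let g : ℝ →ᵃ[ℝ] ℝ :=
    (DistribSMul.toLinearMap ℝ ℝ a⁻¹).toAffineMap + AffineMap.const ℝ ℝ (b / a)
  have hg : ∀ x, g x = (x + b) / a := fun x => by simp [g, div_eq_inv_mul, mul_add]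
  refine ((convexOn_log_Gamma.comp_affineMap g).subset (fun x hx => ?_) (convex_Ioi 0)).congr
    fun x _ => by simp [hg]
  simp only [Set.mem_preimage, hg, Set.mem_Ioi] at hx ⊢
  positivity

/-- The factor `√((2π)^(n-1) n)` normalises the value at `1` to `1`
(see `prod_Gamma_succ_div_succ`). -/
noncomputable def multiplicationGamma (n : ℕ) (s : ℝ) : ℝ :=
  n ^ s / √((2 * π) ^ (n - 1) * n) * ∏ j ∈ range n, Gamma ((s + j) / n)

namespace multiplicationGamma

variable {n : ℕ} (hn : 0 < n)
include hn

theorem pos {s : ℝ} (hs : 0 < s) : 0 < multiplicationGamma n s := by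
  unfold multiplicationGamma
  have : (0 : ℝ) < n := by exact_mod_cast hn
  exact mul_pos (by positivity) (prod_pos fun j _ => Gamma_pos_of_pos (by positivity))

theorem add_one {s : ℝ} (hs : 0 < s) :
    multiplicationGamma n (s + 1) = s * multiplicationGamma n s := by
  have hn' : (0 : ℝ) < n := by exact_mod_cast hn
  set f : ℕ → ℝ := fun j => Gamma ((s + j) / n)
  have hshift :
      ∏ j ∈ range n, Gamma ((s + 1 + j) / n) = (∏ j ∈ range n, f j) * (s / n) := by
    have hlast : f n = s / n * f 0 := by
      simp only [f, Nat.cast_zero, add_zero]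
      rw [add_div, div_self hn'.ne', Gamma_add_one (by positivity)]
    have h := (prod_range_succ' f n).symm.trans (prod_range_succ f n)
    rw [hlast, ← mul_assoc] at h
    have h0 : f 0 ≠ 0 := (Gamma_pos_of_pos (by simp; positivity)).ne'
    refine (prod_congr rfl fun j _ => ?_).trans (mul_right_cancel₀ h0 (h.trans (by ring)))
    simp only [f]
    push_cast
    ring_nf
  rw [multiplicationGamma, multiplicationGamma, hshift, rpow_add hn', rpow_one]
  simp only [f]
  field_simp

theorem one : multiplicationGamma n 1 = 1 := by
  obtain ⟨m, rfl⟩ : ∃ m, n = m + 1 := ⟨n - 1, by omega⟩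
  have hlast : ((1 : ℝ) + m) / ((m + 1 : ℕ) : ℝ) = 1 := by
    rw [div_eq_one_iff_eq (by positivity)]; push_cast; ring
  rw [multiplicationGamma, prod_range_succ, hlast, Gamma_one, mul_one, rpow_one,
    Nat.add_sub_cancel]
  push_cast
  simp_rw [add_comm (1 : ℝ)]
  rw [prod_Gamma_succ_div_succ, sqrt_div' _ (by positivity), sqrt_mul (by positivity)]
  field_simp
  rw [sq_sqrt (by positivity)]

theorem log_convex : ConvexOn ℝ (Set.Ioi 0) (log ∘ multiplicationGamma n) := by
  have hn' : (0 : ℝ) < n := by exact_mod_cast hn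
  have hC : 0 < √((2 * π) ^ (n - 1) * n) := by positivity
  refine (((ConvexOn.finset_sum (convex_Ioi 0) (range n) fun j _ =>
    convexOn_log_Gamma_add_div hn' (Nat.cast_nonneg j)).add
      ((convexOn_id (convex_Ioi 0)).smul (log_natCast_nonneg n))).add_const
        (-log √((2 * π) ^ (n - 1) * n))).congr fun s (hs : 0 < s) => ?_
  have hΓ : ∀ j ∈ range n, Gamma ((s + j) / n) ≠ 0 := fun j _ =>
    (Gamma_pos_of_pos (by positivity)).ne'
  rw [Function.comp_apply, multiplicationGamma, log_mul (by positivity) (prod_ne_zero_iff.2 hΓ),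
    log_div (by positivity) hC.ne', log_rpow hn', log_prod hΓ]
  simp only [Pi.add_apply, id, smul_eq_mul]
  ring

theorem eq_Gamma {s : ℝ} (hs : 0 < s) : multiplicationGamma n s = Gamma s :=
  eq_Gamma_of_log_convex (log_convex hn) (add_one hn) (pos hn) (one hn) hs

end multiplicationGamma

theorem prod_Gamma_add_natCast_div {n : ℕ} (hn : 0 < n) {s : ℝ} (hs : 0 < s) :
    ∏ j ∈ range n, Gamma ((s + j) / n) = √((2 * π) ^ (n - 1) * n) * n ^ (-s) * Gamma s := by
  have hn' : (0 : ℝ) < n := by exact_mod_cast hn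
  rw [← multiplicationGamma.eq_Gamma hn hs, multiplicationGamma, rpow_neg hn'.le]
  field_simp

theorem raney_eq_Gamma {p r : ℝ} (hp : 1 ≤ p) (hr : 0 < r) (m : ℕ) :
    raney p r m = r * Gamma (m * p + r) / (m ! * Gamma (m * p + r - m + 1)) := by
  cases m with
  | zero =>
    simp [raney, Gamma_add_one hr.ne', (mul_pos hr (Gamma_pos_of_pos hr)).ne']
  | succ m =>
    have hm : (m : ℝ) < (m + 1 : ℕ) * p + r := by push_cast; nlinarith
    have hΓ := (Gamma_pos_of_pos (sub_pos.2 hm)).ne'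
    rw [raney, Gamma_eq_prod_Icc_mul_Gamma_sub hm,
      show ((m + 1 : ℕ) : ℝ) * p + r - (m + 1 : ℕ) + 1 = (m + 1 : ℕ) * p + r - m by
        push_cast; ring]
    push_cast at hΓ ⊢
    field_simp

theorem prod_Icc_Gamma_beta {k : ℕ} (hk : 0 < k) (l : ℕ) {r : ℝ} (hr : 0 < r) (m : ℕ) :
    ∏ j ∈ Icc 1 k, Gamma ((r + j - 1) / k + m / l) =
      √((2 * π) ^ (k - 1) * k) * (k : ℝ) ^ (-(m * (k / l) + r)) * Gamma (m * (k / l) + r) := by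
  have hk' : (0 : ℝ) < k := by exact_mod_cast hk
  rw [← prod_Gamma_add_natCast_div hk (by positivity),
    show Icc 1 k = Ioc 0 k from Icc_add_one_left_eq_Ioc 0 k, prod_Ioc_eq_prod_range, Nat.sub_zero]
  refine prod_congr rfl fun i _ => congrArg Gamma ?_
  push_cast
  field_simp
  ring

theorem prod_Icc_Gamma_alpha {k l : ℕ} (hl : 0 < l) (hlk : l < k) {r : ℝ} (hr : 0 < r)
    (m : ℕ) :
    ∏ j ∈ Icc 1 k, Gamma ((if j ≤ l then (j : ℝ) / l else (r + j - l) / (k - l)) + m / l) =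
      √((2 * π) ^ (l - 1) * l) * (l : ℝ) ^ (-(m + 1 : ℝ)) * m ! *
        (√((2 * π) ^ (k - l - 1) * (k - l)) * ((k : ℝ) - l) ^ (-(m * (k / l) + r - m + 1)) *
          Gamma (m * (k / l) + r - m + 1)) := by
  have hl' : (0 : ℝ) < l := by exact_mod_cast hl
  have hD : ((k - l : ℕ) : ℝ) = k - l := Nat.cast_sub hlk.le
  have hlk' : (0 : ℝ) < k - l := by rw [← hD]; exact_mod_cast Nat.sub_pos_of_lt hlk
  rw [show Icc 1 k = Ioc 0 k from Icc_add_one_left_eq_Ioc 0 k,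
    ← prod_Ioc_consecutive _ (Nat.zero_le l) hlk.le, ← Gamma_nat_eq_factorial,
    ← prod_Gamma_add_natCast_div hl (by positivity), ← hD,
    ← prod_Gamma_add_natCast_div (Nat.sub_pos_of_lt hlk) (s := m * (k / l) + r - m + 1) (by
      rw [show (m : ℝ) * (k / l) + r - m + 1 = m * ((k - l) / l) + r + 1 by field_simp; ring]
      positivity),
    prod_Ioc_eq_prod_range, prod_Ioc_eq_prod_range, Nat.sub_zero]
  congr 1
  · refine prod_congr rfl fun i hi => ?_
    rw [if_pos (by simp at hi; omega)]
    congr 1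
    push_cast
    field_simp
    ring
  · refine prod_congr rfl fun i hi => ?_
    rw [if_neg (by omega), hD]
    congr 1
    push_cast
    field_simp
    ring

theorem sqrt_two_pi_pow_split {k l : ℕ} (hl : 0 < l) (hlk : l < k) :
    √((2 * π) ^ (k - 1) * k) =
      √(2 * π * k * l * (k - l)) *
        (√((2 * π) ^ (l - 1) * l) * √((2 * π) ^ (k - l - 1) * (k - l))) / (l * (k - l)) := by
  have hD : (0 : ℝ) < k - l := sub_pos.2 (by exact_mod_cast hlk)
  rw [eq_div_iff (by positivity), eq_comm, ← sqrt_mul (by positivity), ← sqrt_mul (by positivity),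
    ← sqrt_sq (by positivity : (0 : ℝ) ≤ l * (k - l)), ← sqrt_mul (by positivity)]
  congr 1
  rw [show k - 1 = 1 + (l - 1) + (k - l - 1) by omega, pow_add, pow_add]
  ring

theorem raney_rpow_identity {K L : ℝ} (hL : 0 < L) (hLK : L < K) (r : ℝ) (m : ℕ) :
    K ^ (-(m * (K / L) + r)) =
      L * (K - L) * (L ^ (-(m + 1 : ℝ)) * (K - L) ^ (-(m * (K / L) + r - m + 1))) /
        ((K / L / (K / L - 1)) ^ r * ((K / L) ^ (K / L) * (K / L - 1) ^ (1 - K / L)) ^ m) := by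
  have hD : 0 < K - L := sub_pos.2 hLK
  have hK : 0 < K := hL.trans hLK
  rw [show K / L - 1 = (K - L) / L by field_simp, eq_div_iff (by positivity)]
  refine log_injOn_pos (Set.mem_Ioi.2 (by positivity)) (Set.mem_Ioi.2 (by positivity)) ?_
  simp (disch := positivity) only [log_mul, log_rpow, log_div, log_pow]
  field_simp
  ring

theorem stmt_2_general (k l : ℕ) (hl : 1 ≤ l) (hlk : l < k) (r : ℝ) (hr : 0 < r) (m : ℕ) :
    raney ((k : ℝ) / (l : ℝ)) r m =
      r / Real.sqrt (2 * π * (k : ℝ) * (l : ℝ) * ((k : ℝ) - (l : ℝ))) *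
        (((k : ℝ) / (l : ℝ)) / ((k : ℝ) / (l : ℝ) - 1)) ^ r *
        ((∏ j ∈ Finset.Icc 1 k, Gamma ((r + (j : ℝ) - 1) / (k : ℝ) + (m : ℝ) / (l : ℝ))) /
          (∏ j ∈ Finset.Icc 1 k, Gamma ((if j ≤ l then (j : ℝ) / (l : ℝ)
            else (r + (j : ℝ) - (l : ℝ)) / ((k : ℝ) - (l : ℝ))) + (m : ℝ) / (l : ℝ)))) *
        (((k : ℝ) / (l : ℝ)) ^ ((k : ℝ) / (l : ℝ)) *
          ((k : ℝ) / (l : ℝ) - 1) ^ (1 - (k : ℝ) / (l : ℝ))) ^ m := by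
  have hl' : (0 : ℝ) < l := by exact_mod_cast hl
  have hlk' : (l : ℝ) < k := by exact_mod_cast hlk
  have hk : (0 : ℝ) < k := hl'.trans hlk'
  have hD : (0 : ℝ) < k - l := sub_pos.2 hlk'
  have hp : 1 ≤ (k : ℝ) / l := by rw [le_div_iff₀ hl']; linarith
  have hΓ₁ := Gamma_pos_of_pos (by positivity : 0 < m * ((k : ℝ) / l) + r)
  have hΓ₃ := Gamma_pos_of_pos (by nlinarith : 0 < m * ((k : ℝ) / l) + r - m + 1)
  rw [raney_eq_Gamma hp hr, prod_Icc_Gamma_beta (by omega) l hr, prod_Icc_Gamma_alpha hl hlk hr,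
    raney_rpow_identity hl' hlk', sqrt_two_pi_pow_split hl hlk]
  field_simp

/-- For integers `1 ≤ l < k`, `p = k/l`, and real `0 < r ≤ p`,
`A_m(p,r) = (r / √(2π·k·l·(k−l))) · (p/(p−1))^r ·
  (∏_{j=1}^k Γ(β_j + m/l)) / (∏_{j=1}^k Γ(α_j + m/l)) · c(p)^m`,
where `α_j = j/l` for `1 ≤ j ≤ l`, `α_j = (r + j − l)/(k − l)` for `l+1 ≤ j ≤ k`,
`β_j = (r + j − 1)/k`, and `c(p) = p^p·(p−1)^(1−p)`. -/
theorem stmt_2 (k l : ℕ) (hl : 1 ≤ l) (hlk : l < k) (r : ℝ) (hr : 0 < r)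
    (hrp : r ≤ (k : ℝ) / (l : ℝ)) (m : ℕ) :
    raney ((k : ℝ) / (l : ℝ)) r m =
      r / Real.sqrt (2 * π * (k : ℝ) * (l : ℝ) * ((k : ℝ) - (l : ℝ))) *
        (((k : ℝ) / (l : ℝ)) / ((k : ℝ) / (l : ℝ) - 1)) ^ r *
        ((∏ j ∈ Finset.Icc 1 k, Gamma ((r + (j : ℝ) - 1) / (k : ℝ) + (m : ℝ) / (l : ℝ))) /
          (∏ j ∈ Finset.Icc 1 k, Gamma ((if j ≤ l then (j : ℝ) / (l : ℝ)
            else (r + (j : ℝ) - (l : ℝ)) / ((k : ℝ) - (l : ℝ))) + (m : ℝ) / (l : ℝ)))) *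
        (((k : ℝ) / (l : ℝ)) ^ ((k : ℝ) / (l : ℝ)) *
          ((k : ℝ) / (l : ℝ) - 1) ^ (1 - (k : ℝ) / (l : ℝ))) ^ m :=
  stmt_2_general k l hl hlk r hr m
end

section
/- Let k, l be integers with 1 ≤ l < k and let r be real with 0 < r ≤ k/l. Define α_j = j/l for 1 ≤ j ≤ l and α_j = (r + j − l)/(k − l) for l + 1 ≤ j ≤ k, and β_j = (r + j − 1)/k for 1 ≤ j ≤ k. For 1 ≤ i ≤ l + 1 set j_i = ⌊(i−1)k/l⌋ + 1, and define α̃_j = i/l if j = j_i for some 1 ≤ i ≤ l, and α̃_j = (r + j − i)/(k − l) if j_i < j < j_{i+1}. Then the finite sequence (α̃_j)_{j=1}^{k} is a rearrangement of (α_j)_{j=1}^{k} (they are equal as multisets), and β_j ≤ α̃_j for all 1 ≤ j ≤ k. -/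
/-! The points `j_1 = 1 < j_2 < ⋯ < j_{l+1} = k + 1` (strictly increasing because `k / l ≥ 1`)
cut `{1, …, k}` into `l` consecutive blocks. In block `i` the first position carries `i / l` and
every other position `j` carries `(r + t) / (k - l)` with `t = j - i`; from one block to the next
these `t` run through consecutive ranges, so altogether they run through `1, …, k - l` once.
For the inequality, `j_i - 1 ≤ (i - 1) k / l` and `r ≤ k / l` give `β_{j_i} ≤ i / l`, while
`j > j_i` forces `j - 1 > (i - 1) k / l`, which after clearing denominators is
`β_j ≤ (r + j - i) / (k - l)`. -/

open Real

/-- `j_i = ⌊(i−1)·k/l⌋ + 1`. -/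
noncomputable def jfun (k l : ℕ) (i : ℕ) : ℕ := ⌊(((i : ℝ) - 1) * (k : ℝ)) / (l : ℝ)⌋₊ + 1

lemma apply_one_add_le_apply_succ {J : ℕ → ℕ} {n : ℕ}
    (hJ : ∀ i, 1 ≤ i → i ≤ n → J i < J (i + 1)) : J 1 + n ≤ J (n + 1) := by
  induction n with
  | zero => rfl
  | succ n ih =>
    have := hJ (n + 1) (by omega) le_rfl
    have := ih fun i hi hin => hJ i hi (by omega)
    omega

lemma exists_apply_le_lt_apply_succ {J : ℕ → ℕ} {n j : ℕ} (h1 : J 1 ≤ j) (hn : j < J (n + 1)) :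
    ∃ i, 1 ≤ i ∧ i ≤ n ∧ J i ≤ j ∧ j < J (i + 1) := by
  induction n with
  | zero => rw [zero_add] at hn; omega
  | succ n ih =>
    by_cases hj : j < J (n + 1)
    · obtain ⟨i, hi1, hin, hij, hji⟩ := ih hj
      exact ⟨i, hi1, by omega, hij, hji⟩
    · exact ⟨n + 1, by omega, le_rfl, by omega, hn⟩

namespace Multiset

variable {β : Type*}

lemma map_Ico_one_eq_add (g : ℕ → β) {l k : ℕ} (hlk : l ≤ k) :
    (Ico 1 (k + 1)).map g = (Ico 1 (l + 1)).map g + (Ico 1 (k + 1 - l)).map fun t => g (t + l) := by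
  change _ = _ + map (g ∘ (· + l)) _
  rw [← map_map, map_add_right_Ico, Nat.sub_add_cancel (by omega), add_comm 1 l, ← map_add,
    Ico_add_Ico_eq_Ico (by omega) (by omega)]

lemma map_Ico_eq_of_blocks (f a b : ℕ → β) (J : ℕ → ℕ) (n : ℕ)
    (hJ : ∀ i, 1 ≤ i → i ≤ n → J i < J (i + 1))
    (ha : ∀ i, 1 ≤ i → i ≤ n → f (J i) = a i)
    (hb : ∀ i t, 1 ≤ i → i ≤ n → J i < t + i → t + i < J (i + 1) → f (t + i) = b t) :
    (Ico (J 1) (J (n + 1))).map f = (Ico 1 (n + 1)).map a + (Ico (J 1) (J (n + 1) - n)).map b := by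
  induction n with
  | zero => simp
  | succ n ih =>
    have hJ' : ∀ i, 1 ≤ i → i ≤ n → J i < J (i + 1) := fun i hi hin => hJ i hi (by omega)
    have hgrow := apply_one_add_le_apply_succ hJ'
    have hlast := hJ (n + 1) (by omega) le_rfl
    have hshift : Ioo (J (n + 1)) (J (n + 1 + 1)) =
        (Ico (J (n + 1) - n) (J (n + 1 + 1) - (n + 1))).map (· + (n + 1)) := by
      rw [map_add_right_Ico, Nat.sub_add_cancel (by omega),
        show J (n + 1) - n + (n + 1) = J (n + 1) + 1 by omega]
      simp only [Ioo, Ico, Finset.Ico_add_one_left_eq_Ioo]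
    have hblock : (Ioo (J (n + 1)) (J (n + 1 + 1))).map f =
        (Ico (J (n + 1) - n) (J (n + 1 + 1) - (n + 1))).map b := by
      rw [hshift, map_map]
      refine map_congr rfl fun t ht => ?_
      rw [mem_Ico] at ht
      exact hb (n + 1) t (by omega) le_rfl (by omega) (by omega)
    have hprev := ih hJ' (fun i hi _ => ha i hi (by omega)) (fun i t hi _ => hb i t hi (by omega))
    rw [← Ico_add_Ico_eq_Ico (by omega : J 1 ≤ J (n + 1)) hlast.le, map_add, ← Ioo_cons_left hlast,
      map_cons, hprev, ha (n + 1) (by omega) le_rfl, hblock,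
      ← Ico_add_Ico_eq_Ico (c := J (n + 1 + 1) - (n + 1)) (by omega : J 1 ≤ J (n + 1) - n)
        (by omega),
      show Ico 1 (n + 1 + 1) = Icc 1 (n + 1) from
        congrArg Finset.val (Finset.Ico_add_one_right_eq_Icc _ _),
      ← Ico_cons_right (by omega), map_cons, map_add]
    simp only [add_cons, cons_add, add_assoc]

end Multiset

@[simp]
lemma jfun_one (k l : ℕ) : jfun k l 1 = 1 := by
  simp [jfun]

lemma jfun_self_add_one (k : ℕ) {l : ℕ} (hl : l ≠ 0) : jfun k l (l + 1) = k + 1 := by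
  simp [jfun, hl]

lemma lt_jfun (k l i : ℕ) : ((i : ℝ) - 1) * k / l < jfun k l i := by
  unfold jfun
  push_cast
  exact Nat.lt_floor_add_one _

lemma jfun_sub_one_le {k l i : ℕ} (hi : 1 ≤ i) : (jfun k l i : ℝ) - 1 ≤ ((i : ℝ) - 1) * k / l := by
  have hi' : (1 : ℝ) ≤ i := by exact_mod_cast hi
  unfold jfun
  push_cast
  linarith [Nat.floor_le (by positivity : 0 ≤ ((i : ℝ) - 1) * k / l)]

lemma jfun_lt_jfun_add_one {k l i : ℕ} (hl : 0 < l) (hlk : l ≤ k) (hi : 1 ≤ i) :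
    jfun k l i < jfun k l (i + 1) := by
  have hi' : (1 : ℝ) ≤ i := by exact_mod_cast hi
  have hx : 0 ≤ ((i : ℝ) - 1) * k / l := by positivity
  have hstep : ((i : ℝ) - 1) * k / l + 1 ≤ (((i + 1 : ℕ) : ℝ) - 1) * k / l := by
    have : (1 : ℝ) ≤ k / l := (one_le_div (by exact_mod_cast hl)).mpr (by exact_mod_cast hlk)
    have : (((i + 1 : ℕ) : ℝ) - 1) * k / l = ((i : ℝ) - 1) * k / l + k / l := by push_cast; ring
    linarith
  unfold jfun
  have := Nat.floor_le_floor hstep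
  rw [Nat.floor_add_one hx] at this
  omega

lemma add_jfun_sub_one_div_le {k l i : ℕ} {r : ℝ} (hr : r ≤ k / l) (hi : 1 ≤ i) :
    (r + jfun k l i - 1) / k ≤ i / l := by
  refine div_le_of_le_mul₀ (by positivity) (by positivity) ?_
  have : (i : ℝ) / l * k = ((i : ℝ) - 1) * k / l + k / l := by ring
  linarith [jfun_sub_one_le (k := k) (l := l) hi]

lemma add_sub_one_div_le_of_jfun_lt {k l i j : ℕ} {r : ℝ} (hl : 0 < l) (hlk : l < k) (hr : 0 ≤ r)
    (hj : jfun k l i < j) : (r + j - 1) / k ≤ (r + j - i) / (k - l) := by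
  have hl' : (0 : ℝ) < l := by exact_mod_cast hl
  have hlk' : (l : ℝ) < k := by exact_mod_cast hlk
  have hj' : (jfun k l i : ℝ) + 1 ≤ j := by exact_mod_cast hj
  have hlt : ((i : ℝ) - 1) * k < (j - 1) * l :=
    (div_lt_iff₀ hl').mp ((lt_jfun k l i).trans_le (by linarith))
  rw [div_le_div_iff₀ (by linarith) (by linarith)]
  nlinarith [mul_nonneg hr hl'.le]

/-- Let `1 ≤ l < k` be integers and `0 < r ≤ k/l` a real number.
With `α_j = j/l` for `1 ≤ j ≤ l`, `α_j = (r + j − l)/(k − l)` for `l+1 ≤ j ≤ k`,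
`β_j = (r + j − 1)/k`, `j_i = ⌊(i−1)k/l⌋ + 1`, and `α̃` any function satisfying
`α̃_{j_i} = i/l` for `1 ≤ i ≤ l` and `α̃_j = (r + j − i)/(k − l)` whenever `j_i < j < j_{i+1}`
(`1 ≤ i ≤ l`): the finite sequence `(α̃_j)_{j=1}^k` is a rearrangement of `(α_j)_{j=1}^k`
(equal as multisets), and `β_j ≤ α̃_j` for all `1 ≤ j ≤ k`. -/
theorem stmt_3 (k l : ℕ) (hl : 1 ≤ l) (hlk : l < k) (r : ℝ) (hr : 0 < r)
    (hrp : r ≤ (k : ℝ) / (l : ℝ)) (at' : ℕ → ℝ)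
    (hat1 : ∀ i : ℕ, 1 ≤ i → i ≤ l → at' (jfun k l i) = (i : ℝ) / (l : ℝ))
    (hat2 : ∀ i j : ℕ, 1 ≤ i → i ≤ l → jfun k l i < j → j < jfun k l (i + 1) →
      at' j = (r + (j : ℝ) - (i : ℝ)) / ((k : ℝ) - (l : ℝ))) :
    ((Finset.Icc 1 k).val.map at' =
      (Finset.Icc 1 k).val.map (fun j : ℕ => if j ≤ l then (j : ℝ) / (l : ℝ)
        else (r + (j : ℝ) - (l : ℝ)) / ((k : ℝ) - (l : ℝ)))) ∧
    ∀ j : ℕ, 1 ≤ j → j ≤ k → (r + (j : ℝ) - 1) / (k : ℝ) ≤ at' j := by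
  have hlast : jfun k l (l + 1) = k + 1 := jfun_self_add_one k (by omega)
  have hIcc : (Finset.Icc 1 k).val = Multiset.Ico (jfun k l 1) (jfun k l (l + 1)) := by
    rw [jfun_one, hlast]
    exact (congrArg Finset.val (Finset.Ico_add_one_right_eq_Icc 1 k)).symm
  refine ⟨?_, fun j hj hjk => ?_⟩
  · rw [hIcc, Multiset.map_Ico_eq_of_blocks at' (fun i => (i : ℝ) / l) (fun t => (r + t) / (k - l))
      (jfun k l) l (fun i hi _ => jfun_lt_jfun_add_one hl hlk.le hi) hat1
      (fun i t hi hil h1 h2 => by rw [hat2 i (t + i) hi hil h1 h2]; push_cast; ring),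
      jfun_one, hlast, Multiset.map_Ico_one_eq_add _ hlk.le]
    congr 1 <;> refine Multiset.map_congr rfl fun j hj => ?_ <;> rw [Multiset.mem_Ico] at hj
    · rw [if_pos (by omega)]
    · rw [if_neg (by omega)]
      push_cast
      ring
  · obtain ⟨i, hi1, hil, hij, hji⟩ :=
      exists_apply_le_lt_apply_succ (J := jfun k l) (n := l) (by simpa using hj) (by omega)
    rcases hij.eq_or_lt with rfl | hlt
    · rw [hat1 i hi1 hil]
      exact add_jfun_sub_one_div_le hrp hi1
    · rw [hat2 i j hi1 hil hlt hji]
      exact add_sub_one_div_le_of_jfun_lt hl hlk hr.le hlt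
end

section
/- Define W(x) = [ 3·(1 + √(1 − 4x/27))^{2/3} − 2^{2/3}·x^{1/3} ] / ( 2^{4/3}·3^{1/2}·π·x^{2/3}·(1 + √(1 − 4x/27))^{1/3} ) for x ∈ (0, 27/4). Then W(x) ≥ 0 on (0, 27/4) and for every natural number m, ∫₀^{27/4} x^m · W(x) dx = A_m(3, 1) = binom(3m+1, m) / (3m+1). -/
/-!
Substituting `x = 27 w (1 - w)` with `w ∈ (0, 1/2)` gives `√(1 - 4x/27) = 1 - 2w`, and writing
`w = a³`, `1 - w = b³` removes every cube root: the density becomes `(b - a) / (6√3 π a² b²)`.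
Up to the factor `27^(m+1) / (6√3 π)`, the `m`-th moment turns into `∫₀^½ (f w + f (1 - w))
= ∫₀¹ f` for `f w = (1 - 2w) w^(p-1) (1 - w)^(q-1)`, `p = m + 1/3`, `q = m + 2/3`, which is
`B(p, q+1) - B(p+1, q) = B(p, q) / (3 (2m+1))`. Finally
`Γ(m + 1/3) Γ(m + 2/3) = (3m)! / (27^m m!) · Γ(1/3) Γ(2/3)` and the reflection formula
`Γ(1/3) Γ(2/3) = 2π/√3` give `C(3m+1, m) / (3m+1)`, which is also `A_m(3,1)` because
`A_m(p,r) = r/(mp + r) · C(mp + r, m)`.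
-/

open Real

open MeasureTheory ProbabilityTheory
open scoped Nat

lemma rpow_div_three_eq_pow {y : ℝ} (hy : 0 ≤ y) (k : ℕ) :
    y ^ ((k : ℝ) / 3) = (y ^ ((1 : ℝ) / 3)) ^ k := by
  rw [← Real.rpow_natCast, ← Real.rpow_mul hy]
  ring_nf

lemma rpow_one_third_pow_three {y : ℝ} (hy : 0 ≤ y) : (y ^ ((1 : ℝ) / 3)) ^ 3 = y := by
  rw [← rpow_div_three_eq_pow hy]
  norm_num

lemma pow_three_rpow_one_third {y : ℝ} (hy : 0 ≤ y) : (y ^ 3) ^ ((1 : ℝ) / 3) = y := by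
  rw [← Real.rpow_natCast, ← Real.rpow_mul hy]
  norm_num

lemma rpow_nat_add_sub_one {v : ℝ} (hv : 0 < v) (m : ℕ) (s : ℝ) :
    v ^ ((m : ℝ) + s - 1) = v ^ m * v ^ s / v := by
  rw [Real.rpow_sub_one hv.ne', Real.rpow_add hv, Real.rpow_natCast]

section Beta

variable {α β : ℝ}

lemma ofReal_rpow_mul_one_sub_rpow {x : ℝ} (hx0 : 0 ≤ x) (hx1 : x ≤ 1) :
    ((x ^ (α - 1) * (1 - x) ^ (β - 1) : ℝ) : ℂ)
      = (x : ℂ) ^ ((α : ℂ) - 1) * (1 - (x : ℂ)) ^ ((β : ℂ) - 1) := by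
  push_cast
  rw [Complex.ofReal_cpow hx0, Complex.ofReal_cpow (sub_nonneg.2 hx1)]
  push_cast
  rfl

lemma intervalIntegrable_rpow_mul_one_sub_rpow (hα : 0 < α) (hβ : 0 < β) :
    IntervalIntegrable (fun x : ℝ => x ^ (α - 1) * (1 - x) ^ (β - 1)) volume 0 1 := by
  refine (Complex.betaIntegral_convergent (u := α) (v := β) (by simpa) (by simpa)).norm.congr
    fun x hx => ?_
  rw [Set.uIoc_of_le zero_le_one] at hx
  simp only [← ofReal_rpow_mul_one_sub_rpow hx.1.le hx.2, Complex.norm_real, Real.norm_eq_abs]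
  exact abs_of_nonneg (mul_nonneg (rpow_nonneg hx.1.le _) (rpow_nonneg (sub_nonneg.2 hx.2) _))

lemma integral_rpow_mul_one_sub_rpow (hα : 0 < α) (hβ : 0 < β) :
    ∫ x in (0 : ℝ)..1, x ^ (α - 1) * (1 - x) ^ (β - 1) = beta α β := by
  have h : Complex.betaIntegral α β
      = ((∫ x in (0 : ℝ)..1, x ^ (α - 1) * (1 - x) ^ (β - 1) : ℝ) : ℂ) := by
    rw [← intervalIntegral.integral_ofReal, Complex.betaIntegral]
    refine intervalIntegral.integral_congr fun x hx => ?_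
    rw [Set.uIcc_of_le zero_le_one] at hx
    exact (ofReal_rpow_mul_one_sub_rpow hx.1 hx.2).symm
  rw [beta_eq_betaIntegralReal α β hα hβ, h, Complex.ofReal_re]

lemma beta_add_one_left (hα : 0 < α) (hβ : 0 < β) :
    beta (α + 1) β = α / (α + β) * beta α β := by
  rw [beta, beta, add_right_comm, Real.Gamma_add_one hα.ne', Real.Gamma_add_one (by positivity)]
  have := (Real.Gamma_pos_of_pos (add_pos hα hβ)).ne'
  field_simp

lemma beta_add_one_right (hα : 0 < α) (hβ : 0 < β) :
    beta α (β + 1) = β / (α + β) * beta α β := by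
  rw [beta, beta, ← add_assoc, Real.Gamma_add_one hβ.ne', Real.Gamma_add_one (by positivity)]
  have := (Real.Gamma_pos_of_pos (add_pos hα hβ)).ne'
  field_simp

lemma integral_one_sub_two_mul_mul_rpow_mul_one_sub_rpow (hα : 0 < α) (hβ : 0 < β) :
    ∫ x in (0 : ℝ)..1, (1 - 2 * x) * (x ^ (α - 1) * (1 - x) ^ (β - 1))
      = (β - α) / (α + β) * beta α β := by
  have hsplit : Set.EqOn (fun x : ℝ => (1 - 2 * x) * (x ^ (α - 1) * (1 - x) ^ (β - 1)))
      (fun x => x ^ (α - 1) * (1 - x) ^ (β + 1 - 1) - x ^ (α + 1 - 1) * (1 - x) ^ (β - 1))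
      (Set.Ioo 0 1) := fun x hx => by
    simp only [add_sub_cancel_right]
    rw [Real.rpow_sub_one hx.1.ne', Real.rpow_sub_one (sub_pos.2 hx.2).ne']
    have := hx.1.ne'; have := (sub_pos.2 hx.2).ne'
    field_simp
    ring
  rw [intervalIntegral.integral_congr_Ioo_of_le zero_le_one hsplit, intervalIntegral.integral_sub
    (intervalIntegrable_rpow_mul_one_sub_rpow hα (by positivity))
    (intervalIntegrable_rpow_mul_one_sub_rpow (by positivity) hβ),
    integral_rpow_mul_one_sub_rpow hα (by positivity),
    integral_rpow_mul_one_sub_rpow (by positivity) hβ,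
    beta_add_one_left hα hβ, beta_add_one_right hα hβ]
  ring

end Beta

lemma integral_half_add_comp_one_sub {f : ℝ → ℝ} (hf : IntervalIntegrable f volume 0 1) :
    ∫ x in (0 : ℝ)..1 / 2, (f x + f (1 - x)) = ∫ x in (0 : ℝ)..1, f x := by
  have hleft : IntervalIntegrable f volume 0 (1 / 2) :=
    hf.mono_set (Set.uIcc_subset_uIcc_left (by norm_num))
  have hright : IntervalIntegrable f volume (1 / 2) 1 :=
    hf.mono_set (Set.uIcc_subset_uIcc_right (by norm_num))
  have hreflect : IntervalIntegrable (fun x => f (1 - x)) volume 0 (1 / 2) := by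
    convert hright.symm.comp_sub_left 1 using 1 <;> norm_num
  rw [intervalIntegral.integral_add hleft hreflect, intervalIntegral.integral_comp_sub_left,
    ← intervalIntegral.integral_add_adjacent_intervals hleft hright]
  norm_num

lemma integral_eq_integral_comp_mul_one_sub {c : ℝ} (hc : 0 ≤ c) (g : ℝ → ℝ) :
    ∫ x in (0 : ℝ)..c / 4, g x
      = ∫ w in (0 : ℝ)..1 / 2, g (c * w * (1 - w)) * (c * (1 - 2 * w)) := by
  have hderiv (w : ℝ) : HasDerivAt (fun w => c * w * (1 - w)) (c * (1 - 2 * w)) w :=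
    (((hasDerivAt_id' w).const_mul c).mul ((hasDerivAt_id' w).const_sub 1)).congr_deriv (by ring)
  have hsub := intervalIntegral.integral_comp_mul_deriv_of_deriv_nonneg (a := 0) (b := 1 / 2)
    (g := g) (by fun_prop) (fun w _ => hderiv w) (fun w hw => by
      rw [min_eq_left (by norm_num), max_eq_right (by norm_num)] at hw
      nlinarith [hw.2])
  simp only [Function.comp_def, mul_zero, zero_mul] at hsub
  rw [show c / 4 = c * (1 / 2) * (1 - 1 / 2) by ring, ← hsub]

lemma raney_natCast_eq (p r : ℕ) (hr : 0 < r) (m : ℕ) :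
    raney p r m = r * ((m * p + r).choose m : ℝ) / (m * p + r) := by
  have hr' : (0 : ℝ) < r := by exact_mod_cast hr
  cases m with
  | zero => simp [raney, hr'.ne']
  | succ m =>
    have hprod : ∏ j ∈ Finset.range (m + 1), (((m + 1) * p + r : ℕ) - (j : ℝ))
        = ((m + 1 : ℝ) * p + r) *
          ∏ i ∈ Finset.Icc 1 m, (((m : ℝ) + 1) * p + r - (i : ℝ)) := by
      rw [Finset.prod_range_succ', mul_comm, ← Finset.Ico_add_one_right_eq_Icc,
        Finset.prod_Ico_eq_prod_range, Nat.add_sub_cancel]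
      push_cast
      congr 1
      · ring
      · exact Finset.prod_congr rfl fun j _ => by ring
    rw [raney, Nat.cast_choose_eq_descPochhammer_div, descPochhammer_eval_eq_prod_range, hprod]
    have : (0 : ℝ) < (m + 1 : ℝ) * p + r := by positivity
    push_cast
    field_simp

lemma Gamma_nat_add_one_third_mul_Gamma_nat_add_two_thirds (m : ℕ) :
    Gamma (m + 1 / 3) * Gamma (m + 2 / 3) * (27 ^ m * m !) = (3 * m)! * (2 * π / √3) := by
  induction m with
  | zero =>
    have h := Real.Gamma_mul_Gamma_one_sub (1 / 3)
    rw [show π * (1 / 3) = π / 3 by ring, Real.sin_pi_div_three] at h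
    norm_num at h ⊢
    rw [h]
    field_simp
  | succ m ih =>
    rw [Nat.cast_succ, show (m : ℝ) + 1 + 1 / 3 = (m + 1 / 3) + 1 by ring,
      show (m : ℝ) + 1 + 2 / 3 = (m + 2 / 3) + 1 by ring,
      Real.Gamma_add_one (by positivity), Real.Gamma_add_one (by positivity),
      show 3 * (m + 1) = 3 * m + 1 + 1 + 1 by ring, Nat.factorial_succ, Nat.factorial_succ,
      Nat.factorial_succ, Nat.factorial_succ]
    push_cast
    linear_combination (3 * (m : ℝ) + 3) * (3 * m + 2) * (3 * m + 1) * ih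

noncomputable def fussCatalanDensity (x : ℝ) : ℝ :=
  (3 * (1 + √(1 - 4 * x / 27)) ^ ((2 : ℝ) / 3) -
      (2 : ℝ) ^ ((2 : ℝ) / 3) * x ^ ((1 : ℝ) / 3)) /
    ((2 : ℝ) ^ ((4 : ℝ) / 3) * (3 : ℝ) ^ ((1 : ℝ) / 2) * π * x ^ ((2 : ℝ) / 3) *
      (1 + √(1 - 4 * x / 27)) ^ ((1 : ℝ) / 3))

lemma fussCatalanDensity_nonneg {x : ℝ} (hx0 : 0 ≤ x) (hx : x ≤ 27 / 4) :
    0 ≤ fussCatalanDensity x := by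
  have hcbrt : (2 : ℝ) ^ ((2 : ℝ) / 3) * x ^ ((1 : ℝ) / 3) ≤ 3 :=
    calc (2 : ℝ) ^ ((2 : ℝ) / 3) * x ^ ((1 : ℝ) / 3) = (4 * x) ^ ((1 : ℝ) / 3) := by
          rw [Real.mul_rpow (by norm_num) hx0, show (4 : ℝ) = 2 ^ (2 : ℕ) by norm_num,
            ← Real.rpow_natCast, ← Real.rpow_mul (by norm_num)]
          norm_num
      _ ≤ (3 ^ 3) ^ ((1 : ℝ) / 3) := by gcongr; linarith
      _ = 3 := pow_three_rpow_one_third (by norm_num)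
  have hone : 1 ≤ (1 + √(1 - 4 * x / 27)) ^ ((2 : ℝ) / 3) :=
    Real.one_le_rpow (by linarith [Real.sqrt_nonneg (1 - 4 * x / 27)]) (by norm_num)
  unfold fussCatalanDensity
  apply div_nonneg (by linarith)
  have := Real.sqrt_nonneg (1 - 4 * x / 27)
  positivity

lemma fussCatalanDensity_cube_mul_cube {a b : ℝ} (ha : 0 < a) (hab : a ≤ b)
    (h : a ^ 3 + b ^ 3 = 1) :
    fussCatalanDensity (27 * a ^ 3 * b ^ 3) = (b - a) / (6 * √3 * π * a ^ 2 * b ^ 2) := by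
  have hb : 0 < b := ha.trans_le hab
  have hsqrt : √(1 - 4 * (27 * a ^ 3 * b ^ 3) / 27) = b ^ 3 - a ^ 3 := by
    rw [show 1 - 4 * (27 * a ^ 3 * b ^ 3) / 27 = (b ^ 3 - a ^ 3) ^ 2 by
      linear_combination (-(a ^ 3 + b ^ 3) - 1) * h]
    exact Real.sqrt_sq (sub_nonneg.2 (by gcongr))
  set c : ℝ := (2 : ℝ) ^ ((1 : ℝ) / 3)
  have hc0 : 0 < c := by positivity
  have hc3 : c ^ 3 = 2 := rpow_one_third_pow_three (by norm_num)
  have hc2 : (2 : ℝ) ^ ((2 : ℝ) / 3) = c ^ 2 := by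
    exact_mod_cast rpow_div_three_eq_pow (y := 2) (by norm_num) 2
  have hc4 : (2 : ℝ) ^ ((4 : ℝ) / 3) = c ^ 4 := by
    exact_mod_cast rpow_div_three_eq_pow (y := 2) (by norm_num) 4
  have hx : 27 * a ^ 3 * b ^ 3 = (3 * a * b) ^ 3 := by ring
  have hy : 1 + (b ^ 3 - a ^ 3) = (c * b) ^ 3 := by linear_combination -h - b ^ 3 * hc3
  rw [fussCatalanDensity, hsqrt, hy, hx, hc2, hc4, ← Real.sqrt_eq_rpow,
    pow_three_rpow_one_third (by positivity), pow_three_rpow_one_third (by positivity),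
    show ((2 : ℝ) / 3) = ((2 : ℕ) : ℝ) / 3 by norm_num, rpow_div_three_eq_pow (by positivity),
    rpow_div_three_eq_pow (by positivity), pow_three_rpow_one_third (by positivity),
    pow_three_rpow_one_third (by positivity)]
  have : 0 < √3 := by positivity
  field_simp
  linear_combination 3 * (a - b) * hc3

lemma pow_mul_fussCatalanDensity_comp_mul_one_sub (m : ℕ) {w : ℝ} (hw0 : 0 < w)
    (hw : w < 1 / 2) :
    (27 * w * (1 - w)) ^ m * fussCatalanDensity (27 * w * (1 - w)) * (27 * (1 - 2 * w))
      = 27 ^ (m + 1) / (6 * √3 * π) *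
        ((1 - 2 * w) * (w ^ ((m : ℝ) + 1 / 3 - 1) * (1 - w) ^ ((m : ℝ) + 2 / 3 - 1)) +
          (1 - 2 * (1 - w)) *
            ((1 - w) ^ ((m : ℝ) + 1 / 3 - 1) * (1 - (1 - w)) ^ ((m : ℝ) + 2 / 3 - 1))) := by
  have hw1 : 0 < 1 - w := by linarith
  have hab : w ^ ((1 : ℝ) / 3) ≤ (1 - w) ^ ((1 : ℝ) / 3) := by gcongr; linarith
  rw [sub_sub_cancel, rpow_nat_add_sub_one hw0, rpow_nat_add_sub_one hw0,
    rpow_nat_add_sub_one hw1, rpow_nat_add_sub_one hw1,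
    show ((2 : ℝ) / 3) = ((2 : ℕ) : ℝ) / 3 by norm_num, rpow_div_three_eq_pow hw0.le,
    rpow_div_three_eq_pow hw1.le]
  have ha3 := rpow_one_third_pow_three hw0.le
  have hb3 := rpow_one_third_pow_three hw1.le
  set a := w ^ ((1 : ℝ) / 3)
  set b := (1 - w) ^ ((1 : ℝ) / 3)
  have ha : 0 < a := by positivity
  have hb : 0 < b := by positivity
  rw [show 27 * w * (1 - w) = 27 * a ^ 3 * b ^ 3 by rw [ha3, hb3],
    fussCatalanDensity_cube_mul_cube ha hab (by rw [ha3, hb3]; ring),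
    show 1 - 2 * w = (1 - w) - w by ring, show 1 - 2 * (1 - w) = w - (1 - w) by ring,
    ← hb3, ← ha3]
  field_simp
  ring

theorem integral_pow_mul_fussCatalanDensity (m : ℕ) :
    ∫ x in (0 : ℝ)..27 / 4, x ^ m * fussCatalanDensity x
      = ((3 * m + 1).choose m : ℝ) / (3 * m + 1) := by
  have hp : (0 : ℝ) < m + 1 / 3 := by positivity
  have hq : (0 : ℝ) < m + 2 / 3 := by positivity
  have hf : IntervalIntegrable
      (fun v : ℝ => (1 - 2 * v) * (v ^ ((m : ℝ) + 1 / 3 - 1) * (1 - v) ^ ((m : ℝ) + 2 / 3 - 1)))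
      volume 0 1 :=
    (intervalIntegrable_rpow_mul_one_sub_rpow hp hq).continuousOn_mul (by fun_prop)
  calc ∫ x in (0 : ℝ)..27 / 4, x ^ m * fussCatalanDensity x
      = ∫ w in (0 : ℝ)..1 / 2,
          (27 * w * (1 - w)) ^ m * fussCatalanDensity (27 * w * (1 - w)) * (27 * (1 - 2 * w)) :=
        integral_eq_integral_comp_mul_one_sub (by norm_num) (fun x => x ^ m * fussCatalanDensity x)
    _ = ∫ w in (0 : ℝ)..1 / 2, 27 ^ (m + 1) / (6 * √3 * π) *
          ((1 - 2 * w) * (w ^ ((m : ℝ) + 1 / 3 - 1) * (1 - w) ^ ((m : ℝ) + 2 / 3 - 1)) +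
            (1 - 2 * (1 - w)) *
              ((1 - w) ^ ((m : ℝ) + 1 / 3 - 1) * (1 - (1 - w)) ^ ((m : ℝ) + 2 / 3 - 1))) :=
        intervalIntegral.integral_congr_Ioo_of_le (by norm_num) fun w hw =>
          pow_mul_fussCatalanDensity_comp_mul_one_sub m hw.1 hw.2
    _ = 27 ^ (m + 1) / (6 * √3 * π) *
          ((m + 2 / 3 - (m + 1 / 3)) / (m + 1 / 3 + (m + 2 / 3)) *
            beta (m + 1 / 3) (m + 2 / 3)) := by
      rw [intervalIntegral.integral_const_mul, integral_half_add_comp_one_sub hf,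
        integral_one_sub_two_mul_mul_rpow_mul_one_sub_rpow hp hq]
    _ = ((3 * m + 1).choose m : ℝ) / (3 * m + 1) := by
      have hΓ : Gamma (m + 1 / 3) * Gamma (m + 2 / 3)
          = (3 * m)! * (2 * π / √3) / (27 ^ m * m !) :=
        eq_div_of_mul_eq (by positivity) (Gamma_nat_add_one_third_mul_Gamma_nat_add_two_thirds m)
      rw [beta, hΓ, show (m : ℝ) + 1 / 3 + (m + 2 / 3) = (2 * m : ℕ) + 1 by push_cast; ring,
        Real.Gamma_nat_eq_factorial, Nat.cast_choose ℝ (by omega : m ≤ 3 * m + 1),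
        show 3 * m + 1 - m = 2 * m + 1 by omega, Nat.factorial_succ, Nat.factorial_succ]
      have h3 : √3 ^ 2 = 3 := Real.sq_sqrt (by norm_num)
      have : 0 < √3 := by positivity
      field_simp
      push_cast
      linear_combination
        -18 * (2 * (m : ℝ) + 1) * (3 * m + 1) * (3 * m)! * (2 * m)! * 27 ^ m * h3

/-- For
`W(x) = [3·(1 + √(1 − 4x/27))^(2/3) − 2^(2/3)·x^(1/3)] /
        (2^(4/3)·3^(1/2)·π·x^(2/3)·(1 + √(1 − 4x/27))^(1/3))`
on `(0, 27/4)`: `W ≥ 0` there, and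
`∫₀^{27/4} x^m·W(x) dx = A_m(3,1) = C(3m+1, m)/(3m+1)`. -/
theorem stmt_14 :
    (∀ x ∈ Set.Ioo (0 : ℝ) (27 / 4),
      0 ≤ (3 * (1 + Real.sqrt (1 - 4 * x / 27)) ^ ((2 : ℝ) / 3) -
            (2 : ℝ) ^ ((2 : ℝ) / 3) * x ^ ((1 : ℝ) / 3)) /
          ((2 : ℝ) ^ ((4 : ℝ) / 3) * (3 : ℝ) ^ ((1 : ℝ) / 2) * π * x ^ ((2 : ℝ) / 3) *
            (1 + Real.sqrt (1 - 4 * x / 27)) ^ ((1 : ℝ) / 3))) ∧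
    ∀ m : ℕ,
      (∫ x in (0:ℝ)..(27 / 4),
        x ^ m * ((3 * (1 + Real.sqrt (1 - 4 * x / 27)) ^ ((2 : ℝ) / 3) -
            (2 : ℝ) ^ ((2 : ℝ) / 3) * x ^ ((1 : ℝ) / 3)) /
          ((2 : ℝ) ^ ((4 : ℝ) / 3) * (3 : ℝ) ^ ((1 : ℝ) / 2) * π * x ^ ((2 : ℝ) / 3) *
            (1 + Real.sqrt (1 - 4 * x / 27)) ^ ((1 : ℝ) / 3))))
      = raney 3 1 m ∧
      raney 3 1 m = (Nat.choose (3 * m + 1) m : ℝ) / (3 * (m : ℝ) + 1) := by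
  have hraney (m : ℕ) : raney 3 1 m = (Nat.choose (3 * m + 1) m : ℝ) / (3 * (m : ℝ) + 1) := by
    simpa [mul_comm] using raney_natCast_eq 3 1 one_pos m
  refine ⟨fun x hx => fussCatalanDensity_nonneg hx.1.le hx.2.le, fun m => ⟨?_, hraney m⟩⟩
  rw [hraney]
  exact integral_pow_mul_fussCatalanDensity m
end

section
/- Define W(x) = (1/(2π))·√(x·(4 − x)) for x ∈ (0,4) (the Wigner semicircle density with radius 2 centered at x = 2). Then for every natural number m, ∫₀⁴ x^m · W(x) dx = A_m(2, 2) = binom(2m+2, m) / (m+1). -/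
/-! Differentiating `x ^ (m + 1) * (a - x) * √(x * (a - x))` and integrating over `[0, a]`
shows that the moments of `√(x * (a - x))` satisfy the two-term recurrence of the Catalan
numbers, so `∫₀⁴ x ^ m * √(x * (4 - x)) = 2π · catalan (m + 1)`. On the Raney side, for
natural `p` and `r` the product in `A_m(p, r)` is a falling factorial, which gives
`(m p + r) · A_m(p, r) = r · binom(m p + r, m)`; at `p = r = 2` this is
`binom(2m + 2, m) / (m + 1) = catalan (m + 1)`. -/

open Real

open Nat intervalIntegral

theorem raney_succ (p r : ℝ) (m : ℕ) :
    raney p r (m + 1) = r / (m + 1)! * (descPochhammer ℝ m).eval ((m + 1) * p + r - 1) := by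
  rw [raney, descPochhammer_eval_eq_prod_range, ← Finset.Ico_add_one_right_eq_Icc,
    Finset.prod_Ico_eq_prod_range, Nat.add_sub_cancel]
  push_cast
  congr 1
  refine Finset.prod_congr rfl fun j _ => ?_
  ring

theorem natCast_mul_add_mul_raney (p r m : ℕ) :
    ((m * p + r : ℕ) : ℝ) * raney p r m = r * (m * p + r).choose m := by
  rcases m with _ | m
  · simp [raney]
  rcases Nat.eq_zero_or_pos r with rfl | hr
  · simp [raney]
  obtain ⟨N, hN⟩ : ∃ N, (m + 1) * p + r = N + 1 := ⟨(m + 1) * p + r - 1, by omega⟩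
  have hpoch : (descPochhammer ℝ m).eval ((m + 1) * p + r - 1 : ℝ) = N.choose m * m ! := by
    rw [Nat.cast_choose_eq_descPochhammer_div, div_mul_cancel₀ _ (by positivity)]
    have hN' : ((m + 1) * p + r : ℝ) = N + 1 := by exact_mod_cast hN
    rw [hN', add_sub_cancel_right]
  have hchoose : ((N + 1 : ℕ) : ℝ) * N.choose m = (N + 1).choose (m + 1) * (m + 1) := by
    exact_mod_cast Nat.add_one_mul_choose_eq N m
  rw [raney_succ, hpoch, hN, Nat.factorial_succ]
  push_cast at hchoose ⊢
  field_simp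
  linear_combination hchoose

theorem raney_two_two (m : ℕ) : raney 2 2 m = (2 * m + 2).choose m / ((m : ℝ) + 1) := by
  have h := natCast_mul_add_mul_raney 2 2 m
  rw [show m * 2 + 2 = 2 * m + 2 by ring] at h
  rw [eq_div_iff (by positivity)]
  push_cast at h
  linarith

theorem succ_mul_catalan_succ (m : ℕ) : (m + 1) * catalan (m + 1) = (2 * m + 2).choose m := by
  have hcat := succ_mul_catalan_eq_centralBinom (m + 1)
  have hchoose := Nat.choose_succ_right_eq (2 * m + 2) m
  rw [centralBinom_eq_two_mul_choose, show 2 * (m + 1) = 2 * m + 2 by ring] at hcat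
  rw [show 2 * m + 2 - m = m + 2 by omega] at hchoose
  apply Nat.eq_of_mul_eq_mul_left (show 0 < m + 2 by omega)
  linear_combination (m + 1) * hcat + hchoose

theorem succ_succ_mul_catalan_succ (n : ℕ) :
    (n + 2) * catalan (n + 1) = 2 * (2 * n + 1) * catalan n := by
  have h₀ := succ_mul_catalan_eq_centralBinom n
  have h₁ := succ_mul_catalan_eq_centralBinom (n + 1)
  have h := succ_mul_centralBinom_succ n
  apply Nat.eq_of_mul_eq_mul_left (show 0 < n + 1 by omega)
  rw [← h₁, ← h₀] at h
  linarith

theorem catalan_succ_eq_choose_div (m : ℕ) :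
    (catalan (m + 1) : ℝ) = (2 * m + 2).choose m / ((m : ℝ) + 1) := by
  rw [eq_div_iff (by positivity), mul_comm]
  exact_mod_cast succ_mul_catalan_succ m

theorem integral_sqrt_mul_sub {a : ℝ} (ha : 0 < a) :
    ∫ x in (0 : ℝ)..a, √(x * (a - x)) = π * a ^ 2 / 8 := by
  have hrescale : ∀ x : ℝ, √(x * (a - x)) = a / 2 * √(1 - (2 / a * x - 1) ^ 2) := by
    intro x
    rw [← sqrt_sq (by positivity : 0 ≤ a / 2), ← sqrt_mul (by positivity)]
    congr 1
    field_simp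
    ring
  simp_rw [hrescale]
  rw [integral_const_mul, integral_comp_mul_sub (fun y => √(1 - y ^ 2)) (by positivity)]
  norm_num [ha.ne', integral_sqrt_one_sub_sq]
  ring

theorem hasDerivAt_pow_succ_mul_sub_mul_sqrt (a : ℝ) (m : ℕ) {x : ℝ} (hx : 0 < x * (a - x)) :
    HasDerivAt (fun y => y ^ (m + 1) * (a - y) * √(y * (a - y)))
      ((2 * m + 3) * a / 2 * (x ^ m * √(x * (a - x))) -
        (m + 3) * (x ^ (m + 1) * √(x * (a - x)))) x := by
  have hsub : HasDerivAt (fun y => a - y) (-1) x := (hasDerivAt_id x).const_sub a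
  have hu : HasDerivAt (fun y => y * (a - y)) (a - 2 * x) x := by
    refine ((hasDerivAt_id x).fun_mul hsub).congr_deriv ?_
    simp only [id]
    ring
  have hsq : √(x * (a - x)) ^ 2 = x * (a - x) := sq_sqrt hx.le
  refine (((hasDerivAt_pow (m + 1) x).fun_mul hsub).fun_mul (hu.sqrt hx.ne')).congr_deriv ?_
  rw [Nat.add_sub_cancel]
  push_cast
  field_simp
  linear_combination -(x ^ m * (a - 2 * x)) * hsq

theorem integral_pow_succ_mul_sqrt_mul_sub {a : ℝ} (ha : 0 ≤ a) (m : ℕ) :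
    (m + 3) * ∫ x in (0 : ℝ)..a, x ^ (m + 1) * √(x * (a - x)) =
      (2 * m + 3) * a / 2 * ∫ x in (0 : ℝ)..a, x ^ m * √(x * (a - x)) := by
  have hint : ∀ k : ℕ,
      IntervalIntegrable (fun x => x ^ k * √(x * (a - x))) MeasureTheory.volume 0 a :=
    fun k => (by fun_prop : Continuous fun x => x ^ k * √(x * (a - x))).intervalIntegrable _ _
  have hftc := integral_eq_sub_of_hasDerivAt_of_le ha (by fun_prop)
    (fun x hx => hasDerivAt_pow_succ_mul_sub_mul_sqrt a m (mul_pos hx.1 (sub_pos.2 hx.2)))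
    (((hint m).const_mul _).sub ((hint (m + 1)).const_mul _))
  rw [integral_sub ((hint m).const_mul _) ((hint (m + 1)).const_mul _), integral_const_mul,
    integral_const_mul] at hftc
  simp only [sub_self, mul_zero, zero_mul] at hftc
  linarith

theorem integral_pow_mul_sqrt_mul_sub {a : ℝ} (ha : 0 < a) (m : ℕ) :
    ∫ x in (0 : ℝ)..a, x ^ m * √(x * (a - x)) =
      2 * π * catalan (m + 1) * (a / 4) ^ (m + 2) := by
  induction m with
  | zero =>
    simp only [pow_zero, one_mul, integral_sqrt_mul_sub ha, zero_add, catalan_one]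
    ring
  | succ n ih =>
    have hrec := integral_pow_succ_mul_sqrt_mul_sub ha.le n
    have hcat : ((n + 3 : ℕ) : ℝ) * catalan (n + 2) = (4 * n + 6 : ℕ) * catalan (n + 1) := by
      exact_mod_cast (succ_succ_mul_catalan_succ (n + 1)).trans (by ring)
    rw [ih] at hrec
    push_cast at hrec hcat ⊢
    apply mul_left_cancel₀ (by positivity : (n : ℝ) + 3 ≠ 0)
    rw [hrec]
    linear_combination (-(2 * π * (a / 4) ^ (n + 3))) * hcat

/-- For the radius-2 Wigner semicircle density `W(x) = (1/(2π))·√(x·(4−x))`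
on `(0,4)` and every natural `m`, `∫₀⁴ x^m·W(x) dx = A_m(2,2) = C(2m+2, m)/(m+1)`. -/
theorem stmt_18 (m : ℕ) :
    (∫ x in (0:ℝ)..4, x ^ m * ((1 / (2 * π)) * Real.sqrt (x * (4 - x)))) = raney 2 2 m ∧
    raney 2 2 m = (Nat.choose (2 * m + 2) m : ℝ) / ((m : ℝ) + 1) := by
  refine ⟨?_, raney_two_two m⟩
  simp_rw [mul_left_comm _ (1 / (2 * π))]
  rw [integral_const_mul, integral_pow_mul_sqrt_mul_sub (by norm_num) m, raney_two_two,
    ← catalan_succ_eq_choose_div]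
  field_simp
  norm_num
end

section
/- Let ν₁ be the probability measure on [0,1] with density 1/(π·√(x − x²)) (the arcsine distribution b(1, 1/2, 1)) and let ν₂ be Lebesgue measure on [0,1] (the distribution b(2, 1, 1)). Then the pushforward of the product measure ν₁ ⊗ ν₂ under the map (x, y) ↦ 4·x·y equals the Marchenko–Pastur measure μ(2,1), i.e. the measure on [0,4] with density (1/(2π))·√((4 − x)/x). -/
/-!
For fixed `x > 0` the map `y ↦ 4xy` sends the uniform law on `[0,1]` to the uniform law on
`[0,4x]`, so `(x, 4xy)` has joint density `f(x) (4x)⁻¹ 1[0 ≤ u ≤ 4x]`, where `f` is the arcsine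
density. Integrating out `x` (Tonelli), `u ∈ (0,4)` has density
`∫_{u/4}^1 dx / (4πx √(x - x²))`, and since `-(1/2π) √((1 - x)/x)` is a primitive of the
integrand, this equals `(1/2π) √((4 - u)/u)`.
-/

open MeasureTheory Real Set
open scoped ENNReal

lemma lintegral_withDensity_apply_swap {α β : Type*} [MeasurableSpace α] [MeasurableSpace β]
    {μ : Measure α} {ν : Measure β} [SFinite μ] [SFinite ν] {k : α → β → ℝ≥0∞}
    (hk : Measurable (Function.uncurry k)) (s : Set β) :
    ∫⁻ x, ν.withDensity (k x) s ∂μ = ν.withDensity (fun y => ∫⁻ x, k x y ∂μ) s := by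
  simp only [withDensity_apply']
  exact lintegral_lintegral_swap hk.aemeasurable

lemma volume_restrict_Icc_preimage_mul_left {c : ℝ} (hc : 0 < c) (s : Set ℝ) :
    volume.restrict (Icc 0 1) ((c * ·) ⁻¹' s) = ENNReal.ofReal c⁻¹ * volume (s ∩ Icc 0 c) := by
  have hpre : (c * ·) ⁻¹' s ∩ Icc 0 1 = (c * ·) ⁻¹' (s ∩ Icc 0 c) := by
    ext y
    simp only [mem_inter_iff, mem_preimage, mem_Icc, mul_nonneg_iff_of_pos_left hc,
      mul_le_iff_le_one_right hc]
  rw [Measure.restrict_apply' measurableSet_Icc, hpre, Real.volume_preimage_mul_left hc.ne',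
    abs_of_pos (inv_pos.2 hc)]

lemma hasDerivAt_neg_sqrt_one_sub_div {x : ℝ} (hx0 : 0 < x) (hx1 : x < 1) :
    HasDerivAt (fun x : ℝ => -(1 / (2 * π)) * √((1 - x) / x))
      (1 / (π * √(x - x ^ 2)) / (4 * x)) x := by
  have h1x : 0 < 1 - x := by linarith
  have hq : HasDerivAt (fun x : ℝ => (1 - x) / x) ((-1 * x - (1 - x) * 1) / x ^ 2) x :=
    ((hasDerivAt_id x).const_sub 1).div (hasDerivAt_id x) hx0.ne'
  refine ((hq.sqrt (div_pos h1x hx0).ne').const_mul _).congr_deriv ?_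
  have hsx := Real.sqrt_pos.2 hx0
  have hs1 := Real.sqrt_pos.2 h1x
  rw [Real.sqrt_div h1x.le, show x - x ^ 2 = x * (1 - x) by ring, Real.sqrt_mul hx0.le]
  field_simp
  rw [Real.sq_sqrt hx0.le]
  ring

lemma lintegral_Ioc_arcsine_div_four_mul {a : ℝ} (ha0 : 0 < a) (ha1 : a < 1) :
    ∫⁻ x in Ioc a 1, ENNReal.ofReal (1 / (π * √(x - x ^ 2)) / (4 * x)) =
      ENNReal.ofReal (1 / (2 * π) * √((1 - a) / a)) := by
  set F : ℝ → ℝ := fun x => -(1 / (2 * π)) * √((1 - x) / x)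
  have hcont : ContinuousOn F (Icc a 1) :=
    continuousOn_const.mul ((continuousOn_const.sub continuousOn_id).div continuousOn_id
      fun x hx => (ha0.trans_le hx.1).ne').sqrt
  have hderiv : ∀ x ∈ Ioo a 1, HasDerivAt F (1 / (π * √(x - x ^ 2)) / (4 * x)) x :=
    fun x hx => hasDerivAt_neg_sqrt_one_sub_div (ha0.trans hx.1) hx.2
  have hnonneg : ∀ x ∈ Ioc a 1, 0 ≤ 1 / (π * √(x - x ^ 2)) / (4 * x) := fun x hx => by
    have := ha0.trans hx.1
    positivity
  -- The singularity at `1` is harmless: a nonnegative derivative of a continuous function.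
  have hint : IntervalIntegrable (fun x => 1 / (π * √(x - x ^ 2)) / (4 * x)) volume a 1 := by
    refine intervalIntegral.intervalIntegrable_deriv_of_nonneg (by rwa [uIcc_of_le ha1.le]) ?_ ?_
      <;> rw [min_eq_left ha1.le, max_eq_right ha1.le]
    · exact hderiv
    · exact fun x hx => hnonneg x (Ioo_subset_Ioc_self hx)
  rw [← ofReal_integral_eq_lintegral_ofReal ((intervalIntegrable_iff_integrableOn_Ioc_of_le
      ha1.le).1 hint) ((ae_restrict_iff' measurableSet_Ioc).2 (.of_forall hnonneg)),
    ← intervalIntegral.integral_of_le ha1.le,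
    intervalIntegral.integral_eq_sub_of_hasDerivAt_of_le ha1.le hcont hderiv hint]
  simp [F]

-- The joint density of `(x, 4xy)`, with `x` arcsine- and `y` uniformly distributed.
noncomputable def arcsineMulUniformDensity (x u : ℝ) : ℝ≥0∞ :=
  if x ∈ Ioo 0 1 ∧ u ∈ Icc 0 (4 * x) then ENNReal.ofReal (1 / (π * √(x - x ^ 2)) / (4 * x))
  else 0

lemma measurable_arcsineMulUniformDensity :
    Measurable (Function.uncurry arcsineMulUniformDensity) := by
  refine Measurable.ite ?_ (by fun_prop) measurable_const
  exact (measurable_fst measurableSet_Ioo).inter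
    ((measurableSet_le measurable_const measurable_snd).inter
      (measurableSet_le measurable_snd (by fun_prop)))

lemma arcsineMulUniformDensity_of_mem {x : ℝ} (hx : x ∈ Ioo 0 1) :
    arcsineMulUniformDensity x =
      (Icc 0 (4 * x)).indicator fun _ => ENNReal.ofReal (1 / (π * √(x - x ^ 2)) / (4 * x)) := by
  ext u
  by_cases hu : u ∈ Icc 0 (4 * x)
  · rw [indicator_of_mem hu, arcsineMulUniformDensity, if_pos ⟨hx, hu⟩]
  · rw [indicator_of_notMem hu, arcsineMulUniformDensity, if_neg fun h => hu h.2]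

lemma arcsineMulUniformDensity_of_notMem {x : ℝ} (hx : x ∉ Ioo 0 1) :
    arcsineMulUniformDensity x = 0 := by
  ext u
  exact if_neg fun h => hx h.1

lemma arcsineMulUniformDensity_eq_indicator_Ico {u : ℝ} (hu : 0 < u) :
    (arcsineMulUniformDensity · u) =
      (Ico (u / 4) 1).indicator fun x => ENNReal.ofReal (1 / (π * √(x - x ^ 2)) / (4 * x)) := by
  ext x
  have hmem : x ∈ Ioo 0 1 ∧ u ∈ Icc 0 (4 * x) ↔ x ∈ Ico (u / 4) 1 := by
    simp only [mem_Ioo, mem_Icc, mem_Ico]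
    constructor
    · rintro ⟨⟨-, hx1⟩, -, hux⟩
      exact ⟨by linarith, hx1⟩
    · rintro ⟨hux, hx1⟩
      exact ⟨⟨by linarith, hx1⟩, hu.le, by linarith⟩
  by_cases hx : x ∈ Ico (u / 4) 1
  · rw [indicator_of_mem hx, arcsineMulUniformDensity, if_pos (hmem.2 hx)]
  · rw [indicator_of_notMem hx, arcsineMulUniformDensity, if_neg (mt hmem.1 hx)]

lemma arcsineMulUniformDensity_of_neg {u : ℝ} (hu : u < 0) (x : ℝ) :
    arcsineMulUniformDensity x u = 0 :=
  if_neg fun h => (h.2.1.trans_lt hu).false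

lemma lintegral_arcsineMulUniformDensity {u : ℝ} (hu : u ≠ 0) :
    ∫⁻ x, arcsineMulUniformDensity x u =
      ENNReal.ofReal ((Ioo 0 4).indicator (fun u => 1 / (2 * π) * √((4 - u) / u)) u) := by
  rcases hu.lt_or_gt with hneg | hpos
  · simp [arcsineMulUniformDensity_of_neg hneg, indicator_of_notMem fun h : u ∈ Ioo 0 4 =>
      (h.1.trans hneg).false]
  rw [arcsineMulUniformDensity_eq_indicator_Ico hpos, lintegral_indicator measurableSet_Ico]
  by_cases hu4 : u < 4
  · rw [indicator_of_mem (show u ∈ Ioo 0 4 from ⟨hpos, hu4⟩), setLIntegral_congr Ico_ae_eq_Ioc,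
      lintegral_Ioc_arcsine_div_four_mul (by positivity) (by linarith)]
    congr 3
    field_simp
  · rw [Ico_eq_empty (by linarith), indicator_of_notMem fun h => hu4 h.2]
    simp

lemma withDensity_arcsineMulUniformDensity_apply (x : ℝ) (s : Set ℝ) :
    volume.withDensity (arcsineMulUniformDensity x) s =
      ENNReal.ofReal ((Ioo 0 1).indicator (fun x => 1 / (π * √(x - x ^ 2))) x) *
        volume.restrict (Icc 0 1) ((4 * x * ·) ⁻¹' s) := by
  by_cases hx : x ∈ Ioo 0 1
  · have hx4 : 0 < 4 * x := by linarith [hx.1]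
    have hφ : 0 ≤ 1 / (π * √(x - x ^ 2)) := by positivity
    rw [arcsineMulUniformDensity_of_mem hx, withDensity_apply', lintegral_indicator_const
      measurableSet_Icc, Measure.restrict_apply measurableSet_Icc, inter_comm,
      indicator_of_mem hx, volume_restrict_Icc_preimage_mul_left hx4, ← mul_assoc,
      ← ENNReal.ofReal_mul hφ, div_eq_mul_inv]
  · rw [arcsineMulUniformDensity_of_notMem hx, indicator_of_notMem hx]
    simp

/-- Let `ν₁` be the arcsine distribution `b(1,1/2,1)` on `[0,1]` (density
`1/(π·√(x − x²))`) and `ν₂` Lebesgue measure on `[0,1]` (the distribution `b(2,1,1)`).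
The pushforward of `ν₁ ⊗ ν₂` under `(x, y) ↦ 4·x·y` is the Marchenko–Pastur measure
`μ(2,1)`, i.e. the measure on `[0,4]` with density `(1/(2π))·√((4 − x)/x)`. -/
theorem stmt_19 :
    Measure.map (fun q : ℝ × ℝ => 4 * q.1 * q.2)
      ((volume.withDensity (fun x : ℝ =>
          ENNReal.ofReal (Set.indicator (Set.Ioo (0:ℝ) 1)
            (fun x : ℝ => 1 / (π * Real.sqrt (x - x ^ 2))) x))).prod
        (volume.restrict (Set.Icc (0:ℝ) 1)))
    = volume.withDensity (fun x : ℝ =>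
        ENNReal.ofReal (Set.indicator (Set.Ioo (0:ℝ) 4)
          (fun x : ℝ => (1 / (2 * π)) * Real.sqrt ((4 - x) / x)) x)) := by
  ext s hs
  have hT : Measurable fun q : ℝ × ℝ => 4 * q.1 * q.2 := by fun_prop
  have hφ : Measurable fun x : ℝ =>
      ENNReal.ofReal ((Ioo 0 1).indicator (fun x => 1 / (π * √(x - x ^ 2))) x) :=
    (Measurable.indicator (by fun_prop) measurableSet_Ioo).ennreal_ofReal
  have hae : ∀ᵐ u : ℝ, u ≠ 0 := by simp [ae_iff, measure_singleton]
  rw [Measure.map_apply hT hs, Measure.prod_apply (hT hs),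
    lintegral_withDensity_eq_lintegral_mul _ hφ (measurable_measure_prodMk_left (hT hs))]
  calc ∫⁻ x, _ = ∫⁻ x, volume.withDensity (arcsineMulUniformDensity x) s :=
        lintegral_congr fun x => (withDensity_arcsineMulUniformDensity_apply x s).symm
    _ = volume.withDensity (fun u => ∫⁻ x, arcsineMulUniformDensity x u) s :=
        lintegral_withDensity_apply_swap measurable_arcsineMulUniformDensity s
    _ = _ := by
        rw [withDensity_congr_ae (hae.mono fun u hu => lintegral_arcsineMulUniformDensity hu)]
end
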